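/- arXiv:1210.5399 — 8 statements merged into one kernel-verified Lean document; each statement's English description precedes it below -/
import Mathlib

section
/- Let x = Σᵢ λᵢ eᵢ ⊗ fᵢ be a Schmidt decomposition of a unit vector x in ℂⁿ ⊗ ℂⁿ (with {eᵢ} and {fᵢ} orthonormal families and λᵢ ≥ 0, Σᵢ λᵢ² = 1). Then for any unit vector z and the rank-one projections P_z, P_x, one has Tr((1 ⊗ P_z) P_x) = Σᵢ λᵢ² |zᵢ|² ≤ maxᵢ λᵢ², where zᵢ = (fᵢ, z). -/
open Matrix Kronecker
open scoped ComplexOrder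

noncomputable section

/-- Tensor product of two vectors in `ℂⁿ`. -/
def tens {n : ℕ} (x y : Fin n → ℂ) : Fin n × Fin n → ℂ := fun p => x p.1 * y p.2

/-- Rank-one projection `|v⟩⟨v|` on `ℂⁿ`. -/
def proj {n : ℕ} (v : Fin n → ℂ) : Matrix (Fin n) (Fin n) ℂ :=
  Matrix.vecMulVec v (star v)

/-- Rank-one projection on `ℂⁿ ⊗ ℂⁿ`. -/
def projT {n : ℕ} (v : Fin n × Fin n → ℂ) :
    Matrix (Fin n × Fin n) (Fin n × Fin n) ℂ :=
  Matrix.vecMulVec v (star v)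

lemma trace_mul_vecMulVec {m : Type*} [Fintype m] (A : Matrix m m ℂ) (u : m → ℂ) :
    Matrix.trace (A * Matrix.vecMulVec u (star u)) = star u ⬝ᵥ (A *ᵥ u) := by
  simp only [Matrix.trace, Matrix.diag, Matrix.mul_apply, Matrix.vecMulVec_apply,
    dotProduct, Matrix.mulVec, Pi.star_apply]
  congr 1; ext p
  rw [Finset.mul_sum]
  congr 1; ext q
  ring

lemma kron_mulVec_tens {n : ℕ} (z u v : Fin n → ℂ) :
    ((1 : Matrix (Fin n) (Fin n) ℂ) ⊗ₖ Matrix.vecMulVec z (star z)) *ᵥ tens u v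
      = (star z ⬝ᵥ v) • tens u z := by
  ext ⟨a, b⟩
  simp only [Matrix.mulVec, dotProduct, Fintype.sum_prod_type,
    Matrix.kroneckerMap_apply, Matrix.one_apply, Matrix.vecMulVec_apply, tens,
    Pi.smul_apply, smul_eq_mul, Pi.star_apply]
  rw [Finset.sum_eq_single a]
  · simp only [eq_self_iff_true, if_true, one_mul, Finset.sum_mul]
    congr 1; ext d; ring
  · intro c _ hc; simp [if_neg (Ne.symm hc)]
  · simp

lemma dot_tens {n : ℕ} (u v u' v' : Fin n → ℂ) :
    star (tens u v) ⬝ᵥ tens u' v' = (star u ⬝ᵥ u') * (star v ⬝ᵥ v') := by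
  simp only [dotProduct, tens, Pi.star_apply, Fintype.sum_prod_type]
  rw [Finset.sum_mul_sum]
  apply Finset.sum_congr rfl; intro a _
  apply Finset.sum_congr rfl; intro b _
  rw [star_mul']
  ring

lemma dotProduct_sum' {m ι : Type*} [Fintype m] (s : Finset ι) (u : m → ℂ)
    (v : ι → m → ℂ) : u ⬝ᵥ (∑ i ∈ s, v i) = ∑ i ∈ s, u ⬝ᵥ v i := by
  simp only [dotProduct, Finset.sum_apply, Finset.mul_sum]
  rw [Finset.sum_comm]

lemma sum_dotProduct' {m ι : Type*} [Fintype m] (s : Finset ι) (u : ι → m → ℂ)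
    (v : m → ℂ) : (∑ i ∈ s, u i) ⬝ᵥ v = ∑ i ∈ s, u i ⬝ᵥ v := by
  simp only [dotProduct, Finset.sum_apply, Finset.sum_mul]
  rw [Finset.sum_comm]

lemma bessel_eq {n : ℕ} (f : Fin n → (Fin n → ℂ))
    (hf : ∀ i j, star (f i) ⬝ᵥ f j = if i = j then 1 else 0)
    (z : Fin n → ℂ) (hz : star z ⬝ᵥ z = 1) :
    ∑ i, ‖star (f i) ⬝ᵥ z‖ ^ 2 = 1 := by
  set M : Matrix (Fin n) (Fin n) ℂ := Matrix.of fun k i => f i k with hM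
  have h1 : Mᴴ * M = 1 := by
    ext i j
    have := hf i j
    simpa [Matrix.mul_apply, Matrix.conjTranspose_apply, Matrix.one_apply,
      dotProduct, hM] using this
  have h2 : M * Mᴴ = 1 := mul_eq_one_comm.mp h1
  have hc : (fun i => star (f i) ⬝ᵥ z) = Mᴴ *ᵥ z := by
    ext i
    simp [Matrix.mulVec, dotProduct, Matrix.conjTranspose_apply, hM]
  have key : star (Mᴴ *ᵥ z) ⬝ᵥ (Mᴴ *ᵥ z) = 1 := by
    rw [Matrix.star_mulVec, Matrix.conjTranspose_conjTranspose,
      Matrix.dotProduct_mulVec, Matrix.vecMul_vecMul, h2, Matrix.vecMul_one, hz]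
  apply Complex.ofReal_injective
  push_cast
  rw [← key, ← hc]
  simp only [dotProduct, Pi.star_apply]
  apply Finset.sum_congr rfl; intro i _
  rw [Complex.star_def, ← Complex.normSq_eq_conj_mul_self, Complex.normSq_eq_norm_sq]
  push_cast
  rfl

/-- for a Schmidt decomposition `x = Σᵢ λᵢ eᵢ ⊗ fᵢ` of a unit vector and
any unit vector `z`, `Tr((1 ⊗ P_z) P_x) = Σᵢ λᵢ² |zᵢ|² ≤ maxᵢ λᵢ²` where `zᵢ = (fᵢ, z)`. -/
theorem schmidt_trace_bound {n : ℕ} (hn : 0 < n)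
    (e f : Fin n → (Fin n → ℂ)) (lam : Fin n → ℝ)
    (he : ∀ i j, star (e i) ⬝ᵥ e j = if i = j then 1 else 0)
    (hf : ∀ i j, star (f i) ⬝ᵥ f j = if i = j then 1 else 0)
    (hlam : ∀ i, 0 ≤ lam i) (hnorm : ∑ i, (lam i) ^ 2 = 1)
    (x : Fin n × Fin n → ℂ)
    (hx : x = ∑ i, (lam i : ℂ) • tens (e i) (f i))
    (z : Fin n → ℂ) (hz : star z ⬝ᵥ z = 1) :
    Matrix.trace (((1 : Matrix (Fin n) (Fin n) ℂ) ⊗ₖ proj z) * projT x) =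
      ((∑ i, (lam i) ^ 2 * ‖star (f i) ⬝ᵥ z‖ ^ 2 : ℝ) : ℂ) ∧
    (∑ i, (lam i) ^ 2 * ‖star (f i) ⬝ᵥ z‖ ^ 2 : ℝ) ≤
      Finset.univ.sup' (Finset.univ_nonempty_iff.mpr ⟨⟨0, hn⟩⟩) (fun i => (lam i) ^ 2) := by
  constructor
  · rw [projT, trace_mul_vecMulVec]
    have hAx : ((1 : Matrix (Fin n) (Fin n) ℂ) ⊗ₖ proj z) *ᵥ x
        = ∑ i, ((lam i : ℂ) * (star z ⬝ᵥ f i)) • tens (e i) z := by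
      rw [hx]
      rw [show ((1 : Matrix (Fin n) (Fin n) ℂ) ⊗ₖ proj z) *ᵥ
          (∑ i, (lam i : ℂ) • tens (e i) (f i))
          = ∑ i, (lam i : ℂ) • (((1 : Matrix (Fin n) (Fin n) ℂ) ⊗ₖ proj z) *ᵥ tens (e i) (f i))
        from by
          rw [← Matrix.mulVecLin_apply, map_sum]
          simp [Matrix.mulVecLin_apply]]
      apply Finset.sum_congr rfl; intro i _
      rw [proj, kron_mulVec_tens, smul_smul]
    rw [hAx, hx]
    rw [dotProduct_sum', star_sum]
    simp only [sum_dotProduct', star_smul, smul_dotProduct,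
      dotProduct_smul, Complex.star_def, Complex.conj_ofReal,
      smul_eq_mul]
    push_cast
    apply Finset.sum_congr rfl; intro i _
    rw [Finset.mul_sum, Finset.sum_eq_single i]
    · rw [dot_tens, he i i, if_pos rfl, one_mul]
      have h1 : star z ⬝ᵥ f i = (starRingEnd ℂ) (star (f i) ⬝ᵥ z) := by
        simp only [dotProduct, map_sum, Pi.star_apply, Complex.star_def]
        apply Finset.sum_congr rfl; intro k _
        rw [_root_.map_mul, Complex.conj_conj]
        ring
      have h2 : (starRingEnd ℂ) (star (f i) ⬝ᵥ z) * (star (f i) ⬝ᵥ z)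
          = ((‖star (f i) ⬝ᵥ z‖ : ℂ)) ^ 2 := by
        rw [← Complex.normSq_eq_conj_mul_self, Complex.normSq_eq_norm_sq]
        push_cast
        rfl
      rw [h1]
      linear_combination ((lam i : ℂ)) ^ 2 * h2
    · intro j _ hj
      rw [dot_tens, he j i, if_neg hj]
      ring
    · simp
  · have hb := bessel_eq f hf z hz
    set S := Finset.univ.sup' (Finset.univ_nonempty_iff.mpr ⟨(⟨0, hn⟩ : Fin n)⟩)
      (fun i => (lam i) ^ 2) with hS
    calc ∑ i, (lam i) ^ 2 * ‖star (f i) ⬝ᵥ z‖ ^ 2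
        ≤ ∑ i, S * ‖star (f i) ⬝ᵥ z‖ ^ 2 := by
          apply Finset.sum_le_sum
          intro i _
          apply mul_le_mul_of_nonneg_right
          · exact Finset.le_sup' (fun i => (lam i) ^ 2) (Finset.mem_univ i)
          · positivity
      _ = S * ∑ i, ‖star (f i) ⬝ᵥ z‖ ^ 2 := by rw [Finset.mul_sum]
      _ = S := by rw [hb, mul_one]
end
end

section
/- Let s = 1 - 2q be a block positive symmetry on ℂⁿ ⊗ ℂⁿ with q an orthogonal projection. If v = cos(α) e₁⊗f₁ + sin(α) e₂⊗f₂ (Schmidt rank 2, unit vectors, 0 < α < π/2) is an eigenvector of q with eigenvalue 1, then cos²(α) = sin²(α) = 1/2, i.e., both Schmidt coefficients equal 1/√2. -/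
open Matrix Kronecker
open scoped ComplexOrder

noncomputable section

lemma tens_dot {n : ℕ} (a b x y : Fin n → ℂ) :
    star (tens a b) ⬝ᵥ tens x y = (star a ⬝ᵥ x) * (star b ⬝ᵥ y) := by
  simp only [dotProduct, tens, Pi.star_apply, Fintype.sum_prod_type]
  rw [Finset.sum_mul_sum]
  congr 1; ext i; congr 1; ext j; simp [star_mul']; ring

lemma cs_dot {m : ℕ} (a b : Fin m × Fin m → ℂ) :
    Complex.normSq (star a ⬝ᵥ b) ≤ (star a ⬝ᵥ a).re * (star b ⬝ᵥ b).re := by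
  have h := norm_inner_le_norm (𝕜 := ℂ) ((WithLp.equiv 2 _).symm a) ((WithLp.equiv 2 _).symm b)
  rw [WithLp.equiv_symm_apply, EuclideanSpace.inner_toLp_toLp, dotProduct_comm] at h
  have h2 : Complex.normSq (star a ⬝ᵥ b) ≤
      (‖(WithLp.equiv 2 _).symm a‖ * ‖(WithLp.equiv 2 _).symm b‖)^2 := by
    rw [← Complex.sq_norm]
    exact pow_le_pow_left₀ (norm_nonneg _) h 2
  calc Complex.normSq (star a ⬝ᵥ b) ≤ _ := h2
    _ = (star a ⬝ᵥ a).re * (star b ⬝ᵥ b).re := by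
        rw [mul_pow]
        rw [← @inner_self_eq_norm_sq ℂ, ← @inner_self_eq_norm_sq ℂ,
          WithLp.equiv_symm_apply, EuclideanSpace.inner_toLp_toLp, EuclideanSpace.inner_toLp_toLp,
          dotProduct_comm a, dotProduct_comm b]
        rfl

/-- if `s = 1 - 2q` is a block positive symmetry and
`v = cos α · e₁⊗f₁ + sin α · e₂⊗f₂` (Schmidt rank 2, `0 < α < π/2`) is an
eigenvector of `q` for eigenvalue 1, then both Schmidt coefficients equal `1/√2`. -/
theorem rank_two_eigenvector_balanced {n : ℕ}
    (q : Matrix (Fin n × Fin n) (Fin n × Fin n) ℂ)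
    (hq : q.IsHermitian) (hq2 : q * q = q)
    (hbp : ∀ x y : Fin n → ℂ,
      0 ≤ star (tens x y) ⬝ᵥ (((1 : Matrix (Fin n × Fin n) (Fin n × Fin n) ℂ)
        - (2 : ℂ) • q) *ᵥ tens x y))
    (e₁ e₂ f₁ f₂ : Fin n → ℂ)
    (he₁ : star e₁ ⬝ᵥ e₁ = 1) (he₂ : star e₂ ⬝ᵥ e₂ = 1) (he : star e₁ ⬝ᵥ e₂ = 0)
    (hf₁ : star f₁ ⬝ᵥ f₁ = 1) (hf₂ : star f₂ ⬝ᵥ f₂ = 1) (hf : star f₁ ⬝ᵥ f₂ = 0)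
    (α : ℝ) (hα₀ : 0 < α) (hα₁ : α < Real.pi / 2)
    (v : Fin n × Fin n → ℂ)
    (hv : v = (Real.cos α : ℂ) • tens e₁ f₁ + (Real.sin α : ℂ) • tens e₂ f₂)
    (heig : q *ᵥ v = v) :
    Real.cos α ^ 2 = 1 / 2 ∧ Real.sin α ^ 2 = 1 / 2 := by
  have he' : star e₂ ⬝ᵥ e₁ = 0 := by
    have h := congrArg star he
    rw [star_dotProduct, star_star] at h
    simpa using h
  have hf' : star f₂ ⬝ᵥ f₁ = 0 := by
    have h := congrArg star hf
    rw [star_dotProduct, star_star] at h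
    simpa using h
  have hpy : Real.cos α * Real.cos α + Real.sin α * Real.sin α = 1 := by
    nlinarith [Real.sin_sq_add_cos_sq α]
  have hvv : star v ⬝ᵥ v = 1 := by
    simp only [hv, star_add, star_smul, add_dotProduct, dotProduct_add,
      smul_dotProduct, dotProduct_smul, tens_dot, he₁, he₂, he, he', hf₁, hf₂, hf, hf',
      mul_one, mul_zero, zero_mul, smul_eq_mul, smul_zero, add_zero, zero_add,
      Complex.star_def, Complex.conj_ofReal]
    exact_mod_cast congrArg (Complex.ofReal) hpy
  have habs : star v ᵥ* q = star v := by
    have h : star (q *ᵥ v) = star v ᵥ* qᴴ := star_mulVec q v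
    rw [heig, hq.eq] at h
    exact h.symm
  -- generic bound : for any unit product vector, normSq⟨v,u⟩ ≤ ⟨u,qu⟩.re ≤ 1/2
  have bound : ∀ x y : Fin n → ℂ, star (tens x y) ⬝ᵥ tens x y = 1 →
      Complex.normSq (star v ⬝ᵥ tens x y) ≤ 1 / 2 := by
    intro x y hu
    set u := tens x y with hudef
    have h1 : star v ⬝ᵥ u = star v ⬝ᵥ (q *ᵥ u) := by
      rw [dotProduct_mulVec, habs]
    have h2 : star (q *ᵥ u) ⬝ᵥ (q *ᵥ u) = star u ⬝ᵥ (q *ᵥ u) := by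
      rw [star_mulVec, hq.eq, ← dotProduct_mulVec, mulVec_mulVec, hq2]
    have hcs := cs_dot v (q *ᵥ u)
    rw [h2, ← h1, hvv] at hcs
    simp only [Complex.one_re, one_mul] at hcs
    -- block positivity
    have hb := hbp x y
    rw [sub_mulVec, one_mulVec, dotProduct_sub, smul_mulVec, dotProduct_smul,
      hu] at hb
    have hre := hb.1
    simp only [Complex.zero_re, Complex.sub_re, Complex.one_re, Complex.smul_re,
      smul_eq_mul] at hre
    have : (star u ⬝ᵥ (q *ᵥ u)).re ≤ 1 / 2 := by
      have h2re : ((2:ℂ) * (star u ⬝ᵥ (q *ᵥ u))).re = 2 * (star u ⬝ᵥ (q *ᵥ u)).re := by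
        simp [Complex.mul_re]
      linarith [hre]
    linarith [hcs]
  -- apply to e₁⊗f₁ and e₂⊗f₂
  have hc : Real.cos α ^ 2 ≤ 1 / 2 := by
    have hu : star (tens e₁ f₁) ⬝ᵥ tens e₁ f₁ = 1 := by rw [tens_dot, he₁, hf₁, mul_one]
    have hdot : star v ⬝ᵥ tens e₁ f₁ = (Real.cos α : ℂ) := by
      simp only [hv, star_add, star_smul, add_dotProduct, smul_dotProduct, tens_dot,
        he₁, hf₁, he', hf', mul_one, mul_zero, zero_mul, smul_eq_mul, add_zero,
        Complex.star_def, Complex.conj_ofReal]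
    have := bound e₁ f₁ hu
    rw [hdot, Complex.normSq_ofReal] at this
    nlinarith [this]
  have hs : Real.sin α ^ 2 ≤ 1 / 2 := by
    have hu : star (tens e₂ f₂) ⬝ᵥ tens e₂ f₂ = 1 := by rw [tens_dot, he₂, hf₂, mul_one]
    have hdot : star v ⬝ᵥ tens e₂ f₂ = (Real.sin α : ℂ) := by
      simp only [hv, star_add, star_smul, add_dotProduct, smul_dotProduct, tens_dot,
        he₂, hf₂, he, hf, mul_one, mul_zero, zero_mul, smul_eq_mul, zero_add,
        Complex.star_def, Complex.conj_ofReal]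
    have := bound e₂ f₂ hu
    rw [hdot, Complex.normSq_ofReal] at this
    nlinarith [this]
  constructor <;> nlinarith [Real.sin_sq_add_cos_sq α]
end
end

section
/- In ℂ³ ⊗ ℂ³, let x₁ = (1/√2)(e₁⊗e₁ + e₂⊗e₂), x₂ = (1/√2)(e₁⊗e₃ + e₃⊗e₂), x₃ = (1/√2)(e₂⊗e₃ - e₃⊗e₁). Then s₀ = 1 - 2(P_{x₁} + P_{x₂} + P_{x₃}) is a symmetry, and its partial transpose (1 ⊗ τ)(s₀) equals 3 P_x where x = (1/√3)(e₃⊗e₃ - e₁⊗e₂ + e₂⊗e₁). -/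
open Matrix Kronecker
open scoped ComplexOrder

noncomputable section

/-- Partial transpose on the second tensor factor. -/
def ptrans {n : ℕ} (M : Matrix (Fin n × Fin n) (Fin n × Fin n) ℂ) :
    Matrix (Fin n × Fin n) (Fin n × Fin n) ℂ :=
  Matrix.of fun p q => M (p.1, q.2) (q.1, p.2)

/-- Standard basis vector of `ℂ³`. -/
def ev (i : Fin 3) : Fin 3 → ℂ := Pi.single i 1

lemma ev_apply (i j : Fin 3) : ev i j = if i = j then 1 else 0 := by
  simp [ev, Pi.single_apply, eq_comm]

lemma star_ev (i j : Fin 3) : star (ev i j) = ev i j := by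
  rw [ev_apply]; split <;> simp

lemma projT_smul (c : ℂ) (v : Fin 3 × Fin 3 → ℂ) :
    projT (c • v) = (c * star c) • projT v := by
  ext p q
  simp [projT, Matrix.vecMulVec_apply, mul_comm, mul_assoc, mul_left_comm]

lemma sqrt2_fact : ((Real.sqrt 2 : ℂ))⁻¹ * star ((Real.sqrt 2 : ℂ))⁻¹ = 2⁻¹ := by
  have h : ((Real.sqrt 2 : ℂ)) * ((Real.sqrt 2 : ℂ)) = 2 := by
    norm_cast; rw [Real.mul_self_sqrt] <;> norm_num
  rw [Complex.star_def, map_inv₀, Complex.conj_ofReal, ← mul_inv, h]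

lemma sqrt3_fact : ((Real.sqrt 3 : ℂ))⁻¹ * star ((Real.sqrt 3 : ℂ))⁻¹ = 3⁻¹ := by
  have h : ((Real.sqrt 3 : ℂ)) * ((Real.sqrt 3 : ℂ)) = 3 := by
    norm_cast; rw [Real.mul_self_sqrt] <;> norm_num
  rw [Complex.star_def, map_inv₀, Complex.conj_ofReal, ← mul_inv, h]

lemma projT_isHermitian (v : Fin 3 × Fin 3 → ℂ) : (projT v).IsHermitian := by
  show _ᴴ = _
  ext p q
  simp [projT, Matrix.conjTranspose_apply, Matrix.vecMulVec_apply, mul_comm]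

lemma vmv_mul (a b c d : Fin 3 × Fin 3 → ℂ) :
    vecMulVec a b * vecMulVec c d = (b ⬝ᵥ c) • vecMulVec a d := by
  ext p q
  simp only [Matrix.mul_apply, Matrix.vecMulVec_apply, Matrix.smul_apply,
    dotProduct, smul_eq_mul, Finset.sum_mul]
  exact Finset.sum_congr rfl (fun r _ => by ring)

lemma projT_mul (v w : Fin 3 × Fin 3 → ℂ) :
    projT v * projT w = (star v ⬝ᵥ w) • vecMulVec v (star w) := by
  rw [projT, projT, vmv_mul]

/-- with `x₁ = (e₁⊗e₁+e₂⊗e₂)/√2`, `x₂ = (e₁⊗e₃+e₃⊗e₂)/√2`,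
`x₃ = (e₂⊗e₃-e₃⊗e₁)/√2`, the operator `s₀ = 1 - 2(P_{x₁}+P_{x₂}+P_{x₃})` is a
symmetry and `(1⊗τ)(s₀) = 3 P_x` with `x = (e₃⊗e₃-e₁⊗e₂+e₂⊗e₁)/√3`. -/
theorem s0_symmetry_and_ptrans :
    let x₁ : Fin 3 × Fin 3 → ℂ :=
      ((Real.sqrt 2 : ℂ))⁻¹ • (tens (ev 0) (ev 0) + tens (ev 1) (ev 1))
    let x₂ : Fin 3 × Fin 3 → ℂ :=
      ((Real.sqrt 2 : ℂ))⁻¹ • (tens (ev 0) (ev 2) + tens (ev 2) (ev 1))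
    let x₃ : Fin 3 × Fin 3 → ℂ :=
      ((Real.sqrt 2 : ℂ))⁻¹ • (tens (ev 1) (ev 2) - tens (ev 2) (ev 0))
    let x : Fin 3 × Fin 3 → ℂ :=
      ((Real.sqrt 3 : ℂ))⁻¹ •
        (tens (ev 2) (ev 2) - tens (ev 0) (ev 1) + tens (ev 1) (ev 0))
    let s₀ : Matrix (Fin 3 × Fin 3) (Fin 3 × Fin 3) ℂ :=
      1 - (2 : ℂ) • (projT x₁ + projT x₂ + projT x₃)
    s₀.IsHermitian ∧ s₀ * s₀ = 1 ∧ ptrans s₀ = (3 : ℂ) • projT x := by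
  intro x₁ x₂ x₃ x s₀
  set a1 : Fin 3 × Fin 3 → ℂ := tens (ev 0) (ev 0) + tens (ev 1) (ev 1) with ha1
  set a2 : Fin 3 × Fin 3 → ℂ := tens (ev 0) (ev 2) + tens (ev 2) (ev 1) with ha2
  set a3 : Fin 3 × Fin 3 → ℂ := tens (ev 1) (ev 2) - tens (ev 2) (ev 0) with ha3
  set w : Fin 3 × Fin 3 → ℂ :=
    tens (ev 2) (ev 2) - tens (ev 0) (ev 1) + tens (ev 1) (ev 0) with hw
  have hs : s₀ = 1 - (projT a1 + projT a2 + projT a3) := by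
    simp only [s₀, x₁, x₂, x₃, projT_smul, sqrt2_fact, ← smul_add, smul_smul]
    norm_num
    rfl
  have hx : (3 : ℂ) • projT x = projT w := by
    simp only [x, projT_smul, sqrt3_fact, smul_smul]
    norm_num
    rfl
  have dot : ∀ u v : Fin 3 × Fin 3 → ℂ, star u ⬝ᵥ v =
      ∑ i : Fin 3, ∑ j : Fin 3, star (u (i, j)) * v (i, j) := by
    intro u v
    simp [dotProduct, Fintype.sum_prod_type]
  have d11 : star a1 ⬝ᵥ a1 = 2 := by
    rw [dot]
    simp only [ha1, Pi.add_apply, star_add, star_mul', tens, star_ev, ev_apply,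
      Fin.sum_univ_three]
    simp (config := { decide := true }) only []
    norm_num
  have d22 : star a2 ⬝ᵥ a2 = 2 := by
    rw [dot]
    simp only [ha2, Pi.add_apply, star_add, star_mul', tens, star_ev, ev_apply,
      Fin.sum_univ_three]
    simp (config := { decide := true }) only []
    norm_num
  have d33 : star a3 ⬝ᵥ a3 = 2 := by
    rw [dot]
    simp only [ha3, Pi.sub_apply, star_sub, star_mul', tens, star_ev, ev_apply,
      Fin.sum_univ_three]
    simp (config := { decide := true }) only []
    norm_num
  have d12 : star a1 ⬝ᵥ a2 = 0 := by
    rw [dot]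
    simp only [ha1, ha2, Pi.add_apply, star_add, star_mul', tens, star_ev,
      ev_apply, Fin.sum_univ_three]
    simp (config := { decide := true }) only []
    norm_num
  have d21 : star a2 ⬝ᵥ a1 = 0 := by
    rw [dot]
    simp only [ha1, ha2, Pi.add_apply, star_add, star_mul', tens, star_ev,
      ev_apply, Fin.sum_univ_three]
    simp (config := { decide := true }) only []
    norm_num
  have d13 : star a1 ⬝ᵥ a3 = 0 := by
    rw [dot]
    simp only [ha1, ha3, Pi.add_apply, Pi.sub_apply, star_add, star_sub,
      star_mul', tens, star_ev, ev_apply, Fin.sum_univ_three]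
    simp (config := { decide := true }) only []
    norm_num
  have d31 : star a3 ⬝ᵥ a1 = 0 := by
    rw [dot]
    simp only [ha1, ha3, Pi.add_apply, Pi.sub_apply, star_add, star_sub,
      star_mul', tens, star_ev, ev_apply, Fin.sum_univ_three]
    simp (config := { decide := true }) only []
    norm_num
  have d23 : star a2 ⬝ᵥ a3 = 0 := by
    rw [dot]
    simp only [ha2, ha3, Pi.add_apply, Pi.sub_apply, star_add, star_sub,
      star_mul', tens, star_ev, ev_apply, Fin.sum_univ_three]
    simp (config := { decide := true }) only []
    norm_num
  have d32 : star a3 ⬝ᵥ a2 = 0 := by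
    rw [dot]
    simp only [ha2, ha3, Pi.add_apply, Pi.sub_apply, star_add, star_sub,
      star_mul', tens, star_ev, ev_apply, Fin.sum_univ_three]
    simp (config := { decide := true }) only []
    norm_num
  refine ⟨?_, ?_, ?_⟩
  · rw [hs]
    exact Matrix.isHermitian_one.sub
      (((projT_isHermitian a1).add (projT_isHermitian a2)).add
        (projT_isHermitian a3))
  · rw [hs]
    have e11 : projT a1 * projT a1 = projT a1 + projT a1 := by
      rw [projT_mul, d11, two_smul, projT]
    have e22 : projT a2 * projT a2 = projT a2 + projT a2 := by
      rw [projT_mul, d22, two_smul, projT]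
    have e33 : projT a3 * projT a3 = projT a3 + projT a3 := by
      rw [projT_mul, d33, two_smul, projT]
    have e12 : projT a1 * projT a2 = 0 := by rw [projT_mul, d12, zero_smul]
    have e21 : projT a2 * projT a1 = 0 := by rw [projT_mul, d21, zero_smul]
    have e13 : projT a1 * projT a3 = 0 := by rw [projT_mul, d13, zero_smul]
    have e31 : projT a3 * projT a1 = 0 := by rw [projT_mul, d31, zero_smul]
    have e23 : projT a2 * projT a3 = 0 := by rw [projT_mul, d23, zero_smul]
    have e32 : projT a3 * projT a2 = 0 := by rw [projT_mul, d32, zero_smul]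
    simp only [sub_mul, mul_sub, one_mul, mul_one, add_mul, mul_add,
      e11, e22, e33, e12, e21, e13, e31, e23, e32, add_zero, zero_add]
    abel
  · rw [hs, hx]
    ext ⟨i, j⟩ ⟨k, l⟩
    simp only [ptrans, projT, ha1, ha2, ha3, hw, Matrix.of_apply,
      Matrix.sub_apply, Matrix.add_apply, Matrix.one_apply,
      Matrix.vecMulVec_apply, Pi.star_apply, Pi.add_apply, Pi.sub_apply,
      star_sub, star_add, star_mul', star_ev, tens, Prod.mk.injEq]
    simp only [ev_apply]
    fin_cases i <;> fin_cases j <;> fin_cases k <;> fin_cases l <;>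
      simp (config := { decide := true }) only [] <;> norm_num
end
end

section
/- Let w = Σ_{i,j=1}^{n} E_{ij} ⊗ E_{ji} be the swap operator on ℂⁿ ⊗ ℂⁿ and let φ: M_n(ℂ) → M_n(ℂ) be a unital positive map with Choi matrix σ = Σ_{ij} E_{ij} ⊗ φ(E_{ij}). If Tr(w σ) = n², then the diagonal blocks satisfy φ(E_{ii}) = E_{ii} for all i. -/
open Matrix Kronecker
open scoped ComplexOrder

noncomputable section

/-- Standard basis vector of `ℂⁿ`. -/
def sbv {n : ℕ} (i : Fin n) : Fin n → ℂ := Pi.single i 1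

lemma quad_expand {n : ℕ} (M : Matrix (Fin n) (Fin n) ℂ) (k l : Fin n) (hkl : k ≠ l) (c : ℂ) :
    star ((Pi.single k 1 : Fin n → ℂ) + c • (Pi.single l 1 : Fin n → ℂ)) ⬝ᵥ
      (M *ᵥ ((Pi.single k 1 : Fin n → ℂ) + c • (Pi.single l 1 : Fin n → ℂ))) =
      M k k + c * M k l + (starRingEnd ℂ) c * M l k + (starRingEnd ℂ) c * c * M l l := by
  have h1 : star (Pi.single k (1:ℂ) : Fin n → ℂ) = Pi.single k 1 := by
    ext m; simp [Pi.single_apply, apply_ite (starRingEnd ℂ)]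
  simp only [star_add, star_smul, mulVec_add, mulVec_smul, dotProduct_add, add_dotProduct,
    smul_dotProduct, mulVec_single, mul_one, h1]
  have h2 : star (Pi.single l (1:ℂ) : Fin n → ℂ) = Pi.single l 1 := by
    ext m; simp [Pi.single_apply, apply_ite (starRingEnd ℂ)]
  rw [h2]
  simp only [single_dotProduct, one_mul, Pi.smul_apply, smul_eq_mul, Pi.single_eq_same,
    Pi.single_eq_of_ne hkl, Pi.single_eq_of_ne hkl.symm, star_smul, Pi.star_apply]
  simp only [Complex.star_def, MulOpposite.op_one, one_smul, Matrix.col_apply]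
  ring

lemma psd_entry_zero {n : ℕ} (M : Matrix (Fin n) (Fin n) ℂ)
    (h : ∀ y : Fin n → ℂ, 0 ≤ star y ⬝ᵥ (M *ᵥ y)) (k l : Fin n) (hkl : k ≠ l)
    (hk : M k k = 0) (hl : (M l l).re ≤ 1) : M k l = 0 ∧ M l k = 0 := by
  set a := M k l with ha
  set b := M l k with hb
  set d := M l l with hd
  have hq : ∀ c : ℂ, 0 ≤ a * c + (starRingEnd ℂ) c * b + (starRingEnd ℂ) c * c * d := by
    intro c
    have := h ((Pi.single k 1 : Fin n → ℂ) + c • (Pi.single l 1 : Fin n → ℂ))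
    rw [quad_expand M k l hkl c, hk] at this
    convert this using 1; ring
  have hs : star (Pi.single l (1:ℂ) : Fin n → ℂ) = Pi.single l 1 := by
    ext m; simp [Pi.single_apply, apply_ite (starRingEnd ℂ)]
  have hd0 : (0:ℂ) ≤ d := by
    have := h (Pi.single l 1 : Fin n → ℂ)
    rw [mulVec_single, hs, single_dotProduct, one_mul] at this
    simpa using this
  have hdim : d.im = 0 := by
    rw [Complex.le_def] at hd0; simpa using hd0.2.symm
  have h1 := hq 1
  have h2 := hq Complex.I
  have h3 := hq (-(starRingEnd ℂ) a)
  rw [Complex.le_def] at h1 h2 h3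
  have e1 : a.im + b.im = 0 := by
    have := h1.2; simp [Complex.add_im, Complex.mul_im, hdim] at this; linarith
  have e2 : a.re - b.re = 0 := by
    have := h2.2
    simp [Complex.add_im, Complex.mul_im, Complex.mul_re, Complex.I_re, Complex.I_im, hdim] at this
    linarith
  have e3 := h3.1
  simp [Complex.add_re, Complex.mul_re, Complex.mul_im, Complex.conj_re, Complex.conj_im, hdim] at e3
  have hbre : b.re = a.re := by linarith
  have hbim : b.im = -a.im := by linarith
  rw [hbre, hbim] at e3
  have key : a.re * a.re + a.im * a.im ≤ 0 := by
    nlinarith [mul_le_of_le_one_right (by nlinarith [sq_nonneg a.re, sq_nonneg a.im] : (0:ℝ) ≤ a.re * a.re + a.im * a.im) hl]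
  have hare : a.re = 0 := by nlinarith [sq_nonneg a.re, sq_nonneg a.im]
  have haim : a.im = 0 := by nlinarith [sq_nonneg a.re, sq_nonneg a.im]
  constructor
  · apply Complex.ext <;> simp [hare, haim]
  · apply Complex.ext <;> simp [hbre, hbim, hare, haim]


lemma quad_block {n : ℕ} (σ : Matrix (Fin n × Fin n) (Fin n × Fin n) ℂ)
    (A : Fin n → Fin n → Matrix (Fin n) (Fin n) ℂ)
    (hE : ∀ p q r s : Fin n, σ (p, q) (r, s) = A p r q s) (j : Fin n) (y y' : Fin n → ℂ) :
    star (tens (sbv j) y) ⬝ᵥ (σ *ᵥ tens (sbv j) y') = star y ⬝ᵥ (A j j *ᵥ y') := by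
  simp only [dotProduct, mulVec, Fintype.sum_prod_type, tens, sbv, Pi.star_apply,
    Pi.single_apply, _root_.map_mul, apply_ite (starRingEnd ℂ), _root_.map_one, _root_.map_zero,
    ite_mul, mul_ite, zero_mul, mul_zero]
  rw [Finset.sum_comm]
  simp [Finset.sum_ite_eq, Finset.sum_ite_eq', hE, Complex.star_def, apply_ite (starRingEnd ℂ),
    Finset.mul_sum]

lemma star_single_one {n : ℕ} (k : Fin n) :
    star (Pi.single k (1:ℂ) : Fin n → ℂ) = Pi.single k 1 := by
  ext m; simp [Pi.single_apply, apply_ite (starRingEnd ℂ)]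

lemma quad_at_single {n : ℕ} (M : Matrix (Fin n) (Fin n) ℂ) (k : Fin n) :
    star (Pi.single k 1 : Fin n → ℂ) ⬝ᵥ (M *ᵥ (Pi.single k 1 : Fin n → ℂ)) = M k k := by
  rw [mulVec_single, star_single_one, single_dotProduct]
  simp

lemma tens_basis_inner {n : ℕ} (σ : Matrix (Fin n × Fin n) (Fin n × Fin n) ℂ)
    (i j k l : Fin n) :
    star (tens (sbv i) (sbv j)) ⬝ᵥ (σ *ᵥ tens (sbv k) (sbv l)) = σ (i, j) (k, l) := by
  simp [dotProduct, mulVec, Fintype.sum_prod_type, tens, sbv, Pi.single_apply,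
    apply_ite (starRingEnd ℂ), ite_mul, mul_ite, Finset.sum_ite_eq, Finset.sum_ite_eq',
    Complex.star_def]

lemma stdBasis_transpose {n : ℕ} (i j : Fin n) :
    (Matrix.single i j (1:ℂ))ᵀ = Matrix.single j i 1 := by
  ext a b; simp [Matrix.single, Matrix.transpose_apply, and_comm]

lemma choi_entry' {n : ℕ} (ψ : Matrix (Fin n) (Fin n) ℂ → Matrix (Fin n) (Fin n) ℂ)
    (p q r s : Fin n) :
    (∑ i : Fin n, ∑ j : Fin n, Matrix.single i j (1 : ℂ) ⊗ₖ ψ (Matrix.single i j 1))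
      (p, q) (r, s) = ψ (Matrix.single p r 1) q s := by
  simp [Matrix.sum_apply, Matrix.kroneckerMap_apply, Matrix.single, Matrix.of_apply,
    ite_and, Finset.sum_ite_eq, Finset.sum_ite_eq']

lemma swap_trace_eq {n : ℕ} (σ : Matrix (Fin n × Fin n) (Fin n × Fin n) ℂ) :
    Matrix.trace ((∑ i : Fin n, ∑ j : Fin n,
        Matrix.single i j (1:ℂ) ⊗ₖ Matrix.single j i 1) * σ) =
      ∑ p : Fin n, ∑ q : Fin n, σ (q, p) (p, q) := by
  have hwE : ∀ p q r s : Fin n,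
      (∑ i : Fin n, ∑ j : Fin n,
        Matrix.single i j (1:ℂ) ⊗ₖ Matrix.single j i 1) (p, q) (r, s)
        = if p = s ∧ r = q then 1 else 0 := by
    intro p q r s
    have : (∑ i : Fin n, ∑ j : Fin n,
        Matrix.single i j (1:ℂ) ⊗ₖ Matrix.single j i 1)
        = ∑ i : Fin n, ∑ j : Fin n,
        Matrix.single i j (1:ℂ) ⊗ₖ (Matrix.single i j (1:ℂ))ᵀ := by
      simp [stdBasis_transpose]
    rw [this, choi_entry' (fun M => Mᵀ) p q r s]
    simp [Matrix.single, Matrix.transpose_apply]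
  simp only [Matrix.trace, Matrix.diag, Matrix.mul_apply, Fintype.sum_prod_type]
  simp only [hwE]
  simp [ite_and, Finset.sum_ite_eq, Finset.sum_ite_eq', ite_mul, zero_mul]

lemma sum_diag_stdBasis {n : ℕ} : ∑ j : Fin n, Matrix.single j j (1:ℂ) = 1 := by
  ext a b
  simp [Matrix.sum_apply, Matrix.single, Matrix.one_apply, ite_and,
    Finset.sum_ite_eq, Finset.sum_ite_eq', eq_comm]

lemma re_one_abs_le_one {z : ℂ} (h1 : z.re = 1) (h2 : ‖z‖ ≤ 1) : z = 1 := by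
  have hsq : ‖z‖ ^ 2 ≤ 1 := by nlinarith [norm_nonneg z]
  rw [Complex.sq_norm, Complex.normSq_apply, h1] at hsq
  have him : z.im = 0 := by nlinarith [sq_nonneg z.im]
  exact Complex.ext h1 him

/-- let `w = Σ E_{ij} ⊗ E_{ji}` be the swap and `σ` the Choi matrix of a
unital positive map `φ` with `|(e_i⊗e_j, σ e_j⊗e_i)| ≤ 1` for all `i, j`. If
`Tr(wσ) = n²` then `φ(E_{ii}) = E_{ii}` for all `i`. -/
theorem swap_saturation_diagonal_blocks {n : ℕ}
    (φ : Matrix (Fin n) (Fin n) ℂ →ₗ[ℂ] Matrix (Fin n) (Fin n) ℂ)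
    (hunital : φ 1 = 1)
    (σ : Matrix (Fin n × Fin n) (Fin n × Fin n) ℂ)
    (hσ : σ = ∑ i : Fin n, ∑ j : Fin n,
      Matrix.single i j (1 : ℂ) ⊗ₖ φ (Matrix.single i j 1))
    (hbp : ∀ x y : Fin n → ℂ, 0 ≤ star (tens x y) ⬝ᵥ (σ *ᵥ tens x y))
    (hnormalized : ∀ i j : Fin n,
      ‖star (tens (sbv i) (sbv j)) ⬝ᵥ (σ *ᵥ tens (sbv j) (sbv i))‖ ≤ 1)
    (w : Matrix (Fin n × Fin n) (Fin n × Fin n) ℂ)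
    (hw : w = ∑ i : Fin n, ∑ j : Fin n,
      Matrix.single i j (1 : ℂ) ⊗ₖ Matrix.single j i (1 : ℂ))
    (htr : Matrix.trace (w * σ) = (n : ℂ) ^ 2) :
    ∀ i : Fin n, φ (Matrix.single i i 1) = Matrix.single i i 1 := by
  intro i
  have hσE : ∀ p q r s : Fin n, σ (p, q) (r, s) = φ (Matrix.single p r 1) q s := by
    intro p q r s; rw [hσ]; exact choi_entry' (fun M => φ M) p q r s
  -- positivity of diagonal blocks
  have hpsd : ∀ j : Fin n, ∀ y : Fin n → ℂ,
      0 ≤ star y ⬝ᵥ (φ (Matrix.single j j 1) *ᵥ y) := by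
    intro j y
    have := hbp (sbv j) y
    rwa [quad_block σ (fun p r => φ (Matrix.single p r 1)) hσE j y y] at this
  -- normalization of entries
  have hnorm : ∀ a b : Fin n, ‖φ (Matrix.single a b 1) b a‖ ≤ 1 := by
    intro a b
    have := hnormalized a b
    rwa [tens_basis_inner σ a b b a, hσE a b b a] at this
  -- trace saturation
  have htr2 : ∑ p : Fin n, ∑ q : Fin n, φ (Matrix.single q p 1) p q = (n : ℂ) ^ 2 := by
    rw [hw, swap_trace_eq σ] at htr
    rw [← htr]
    exact Finset.sum_congr rfl fun p _ => Finset.sum_congr rfl fun q _ => (hσE q p p q).symm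
  have hre1 : ∀ p q : Fin n, (φ (Matrix.single q p 1) p q).re = 1 := by
    have hsum : ∑ x : Fin n × Fin n, (1 - (φ (Matrix.single x.2 x.1 1) x.1 x.2).re) = 0 := by
      have h1 : ∑ x : Fin n × Fin n, (φ (Matrix.single x.2 x.1 1) x.1 x.2).re
          = (n : ℝ) ^ 2 := by
        have := congrArg Complex.re htr2
        rw [Complex.re_sum] at this
        simp only [Complex.re_sum] at this
        rw [Fintype.sum_prod_type]
        rw [show (((n:ℂ))^2).re = (n:ℝ)^2 by simp [pow_two, Complex.mul_re]] at this
        exact this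
      simp [Finset.sum_sub_distrib, h1, Finset.card_univ, sq]
    have hnn : ∀ x : Fin n × Fin n, (0:ℝ) ≤ 1 - (φ (Matrix.single x.2 x.1 1) x.1 x.2).re := by
      intro x
      have := (Complex.re_le_norm _).trans (hnorm x.2 x.1)
      linarith
    intro p q
    have := (Finset.sum_eq_zero_iff_of_nonneg (fun x _ => hnn x)).mp hsum (p, q) (Finset.mem_univ _)
    simp at this
    linarith
  have hdiag1 : φ (Matrix.single i i 1) i i = 1 :=
    re_one_abs_le_one (hre1 i i) (hnorm i i)
  -- sum of diagonal blocks is 1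
  have hsumblocks : ∑ j : Fin n, φ (Matrix.single j j 1) = 1 := by
    rw [← map_sum, sum_diag_stdBasis, hunital]
  -- entry nonnegativity of diagonal blocks at (k,k)
  have hge : ∀ j k : Fin n, (0:ℂ) ≤ φ (Matrix.single j j 1) k k := by
    intro j k
    have := hpsd j (Pi.single k 1)
    rwa [quad_at_single] at this
  -- off-index diagonal entries vanish
  have hdiag0 : ∀ j k : Fin n, j ≠ k → φ (Matrix.single j j 1) k k = 0 := by
    intro j k hjk
    have hsumk : ∑ j' : Fin n, φ (Matrix.single j' j' 1) k k = 1 := by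
      have := congrFun (congrFun hsumblocks k) k
      simpa [Matrix.sum_apply] using this
    have hkk1 : φ (Matrix.single k k 1) k k = 1 :=
      re_one_abs_le_one (hre1 k k) (hnorm k k)
    have hsplit : ∑ j' ∈ Finset.univ.erase k, φ (Matrix.single j' j' 1) k k = 0 := by
      have := Finset.add_sum_erase Finset.univ
        (fun j' => φ (Matrix.single j' j' 1) k k) (Finset.mem_univ k)
      simp only [hsumk, hkk1] at this
      linear_combination this
    have hre0 : ∑ j' ∈ Finset.univ.erase k, (φ (Matrix.single j' j' 1) k k).re = 0 := by
      have := congrArg Complex.re hsplit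
      rwa [Complex.re_sum] at this
    have hnn : ∀ j' ∈ Finset.univ.erase k, (0:ℝ) ≤ (φ (Matrix.single j' j' 1) k k).re :=
      fun j' _ => ((Complex.le_def.mp (hge j' k)).1)
    have hterm := (Finset.sum_eq_zero_iff_of_nonneg hnn).mp hre0 j
      (Finset.mem_erase.mpr ⟨hjk, Finset.mem_univ j⟩)
    have him : (φ (Matrix.single j j 1) k k).im = 0 := by
      have := (Complex.le_def.mp (hge j k)).2
      simpa using this.symm
    exact Complex.ext hterm him
  -- diagonal re bound
  have hdre : ∀ l : Fin n, (φ (Matrix.single i i 1) l l).re ≤ 1 := by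
    intro l
    by_cases hl : i = l
    · subst hl; rw [hdiag1]; norm_num
    · rw [hdiag0 i l hl]; norm_num
  ext k l
  by_cases hki : k = i
  · subst hki
    by_cases hlk : l = k
    · subst hlk
      simp [hdiag1]
    · have hz := (psd_entry_zero _ (hpsd k) l k (hlk) (hdiag0 k l (Ne.symm hlk)) (hdre k)).2
      rw [hz]
      exact (Matrix.single_apply_of_ne k k 1 k l (fun h => hlk h.2.symm)).symm
  · have hz : φ (Matrix.single i i 1) k l = 0 := by
      by_cases hkl : k = l
      · subst hkl; exact hdiag0 i k (Ne.symm hki)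
      · exact (psd_entry_zero _ (hpsd i) k l hkl (hdiag0 i k (Ne.symm hki)) (hdre l)).1
    rw [hz]
    exact (Matrix.single_apply_of_ne i i 1 k l (fun h => hki h.1.symm)).symm
end
end

section
/- Let σ = Σ_{ij} E_{ij} ⊗ σ_{ij} be a hermitian block positive matrix on ℂⁿ⊗ℂⁿ such that (e_i, σ_{ii} e_i) = 1 and (e_j, σ_{ii} e_j) = 0 for j ≠ i. Then (e_i, σ_{ij} e_i) = 0 for all i ≠ j. -/
open Matrix
open scoped ComplexOrder

noncomputable section

/-- if `σ` is hermitian and block positive with `(e_i, σ_{ii} e_i) = 1`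
and `(e_j, σ_{ii} e_j) = 0` for `j ≠ i`, then `(e_i, σ_{ij} e_i) = 0` for `i ≠ j`. -/
theorem offdiag_block_vanishing {n : ℕ}
    (σ : Matrix (Fin n × Fin n) (Fin n × Fin n) ℂ)
    (hherm : σ.IsHermitian)
    (hbp : ∀ x y : Fin n → ℂ, 0 ≤ star (tens x y) ⬝ᵥ (σ *ᵥ tens x y))
    (hdiag : ∀ i : Fin n, σ (i, i) (i, i) = 1)
    (hdiag' : ∀ i j : Fin n, j ≠ i → σ (i, j) (i, j) = 0) :
    ∀ i j : Fin n, i ≠ j → σ (i, i) (j, i) = 0 := by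
  intro i j hij
  set a := σ (i, i) (j, i) with ha
  have hconj : σ (j, i) (i, i) = star a := by
    rw [ha, ← hherm.apply (j, i) (i, i)]
  have hsingle : ∀ p : Fin n × Fin n, star (Pi.single p (1 : ℂ)) = (Pi.single p 1 : Fin n × Fin n → ℂ) := by
    intro p; funext q; simp [Pi.single_apply, apply_ite]
  have key : ∀ t : ℂ, (0 : ℂ) ≤ 1 + t * a + star (t * a) := by
    intro t
    have h := hbp ((Pi.single i 1 : Fin n → ℂ) + t • (Pi.single j 1 : Fin n → ℂ)) (Pi.single i 1)
    have hv : tens ((Pi.single i 1 : Fin n → ℂ) + t • (Pi.single j 1 : Fin n → ℂ)) (Pi.single i 1)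
        = (Pi.single (i, i) 1 : Fin n × Fin n → ℂ) + t • (Pi.single (j, i) 1 : Fin n × Fin n → ℂ) := by
      funext p
      rcases p with ⟨p1, p2⟩
      by_cases h1 : p1 = i <;> by_cases h2 : p2 = i <;> by_cases h3 : p1 = j <;>
        simp_all [tens, Pi.single_apply, Prod.ext_iff]
    rw [hv] at h
    have hexp : star ((Pi.single (i, i) 1 : Fin n × Fin n → ℂ) + t • (Pi.single (j, i) 1 : Fin n × Fin n → ℂ)) ⬝ᵥ
        (σ *ᵥ ((Pi.single (i, i) 1 : Fin n × Fin n → ℂ) + t • (Pi.single (j, i) 1 : Fin n × Fin n → ℂ)))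
        = 1 + t * a + star (t * a) := by
      rw [star_add, star_smul, hsingle, hsingle, mulVec_add, mulVec_smul]
      simp only [dotProduct_add, add_dotProduct, dotProduct_smul, smul_dotProduct,
        single_dotProduct, mulVec_single, one_mul, mul_one, smul_eq_mul]
      simp only [Matrix.col_apply, MulOpposite.op_one, one_smul]
      rw [hdiag i, hdiag' j i hij, hconj, ← ha, star_mul']
      ring
    rwa [hexp] at h
  by_contra hne
  have hr : Complex.normSq a ≠ 0 := by simpa [Complex.normSq_eq_zero] using hne
  have := key (-(1 / (Complex.normSq a : ℂ)) * star a)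
  have hsa : star a * a = (Complex.normSq a : ℂ) := by
    rw [mul_comm]; exact Complex.mul_conj a
  have hta : (-(1 / (Complex.normSq a : ℂ)) * star a) * a = -1 := by
    rw [mul_assoc, hsa]
    field_simp
  rw [hta] at this
  norm_num at this
end
end

section
/- The Choi matrix p⊗1, where p is a rank-one projection on ℂⁿ, is an extreme point of the set 𝔇 of hermitian block positive matrices σ on ℂⁿ⊗ℂⁿ satisfying Tr((1⊗P_g)σ) = 1 for every rank-one projection P_g. That is, if p⊗1 = λσ₁ + (1-λ)σ₂ with 0 < λ < 1 and σ₁, σ₂ in this set, then σ₁ = σ₂ = p⊗1. -/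
open Matrix Kronecker
open scoped ComplexOrder

noncomputable section

/-- Membership in the set `𝔇` (normalized Choi matrices): hermitian, block positive,
and `Tr((1 ⊗ P_g)σ) = 1` for every unit vector `g`. -/
def memD {n : ℕ} (σ : Matrix (Fin n × Fin n) (Fin n × Fin n) ℂ) : Prop :=
  σ.IsHermitian ∧
  (∀ x y : Fin n → ℂ, 0 ≤ star (tens x y) ⬝ᵥ (σ *ᵥ tens x y)) ∧
  (∀ g : Fin n → ℂ, star g ⬝ᵥ g = 1 →
    Matrix.trace (((1 : Matrix (Fin n) (Fin n) ℂ) ⊗ₖ proj g) * σ) = 1)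

namespace ExtremeAux

variable {n : ℕ}

/-- A complex matrix whose quadratic form vanishes identically is zero. -/
lemma quad_zero (M : Matrix (Fin n) (Fin n) ℂ)
    (h : ∀ y : Fin n → ℂ, star y ⬝ᵥ (M *ᵥ y) = 0) : M = 0 := by
  have diag : ∀ k, M k k = 0 := by
    intro k
    have := h (Pi.single k 1)
    simpa [← Pi.single_star, single_dotProduct] using this
  have key : ∀ (k l : Fin n) (a b : ℂ),
      (starRingEnd ℂ) a * (M k k * a) + (starRingEnd ℂ) b * (M l k * a)
      + ((starRingEnd ℂ) a * (M k l * b) + (starRingEnd ℂ) b * (M l l * b)) = 0 := by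
    intro k l a b
    have := h (Pi.single k a + Pi.single l b)
    simp [star_add, dotProduct_add, add_dotProduct, mulVec_add,
      ← Pi.single_star, single_dotProduct] at this
    linear_combination this
  ext k l
  rcases eq_or_ne k l with rfl | hkl
  · simpa using diag k
  · have h1 := key k l 1 1
    have h2 := key k l 1 Complex.I
    simp [diag] at h1 h2
    simp only [Matrix.zero_apply]
    have h2' : Complex.I * (M k l - M l k) = 0 := by linear_combination h2
    rcases mul_eq_zero.1 h2' with hI | hd
    · exact absurd hI Complex.I_ne_zero
    · have heq : M k l = M l k := sub_eq_zero.1 hd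
      linear_combination h1/2 + heq/2

/-- The matrix `A(y)` with entries `∑ k l, conj (y k) σ[(i,k),(j,l)] (y l)`. -/
def blockA (σ : Matrix (Fin n × Fin n) (Fin n × Fin n) ℂ) (y : Fin n → ℂ) :
    Matrix (Fin n) (Fin n) ℂ :=
  Matrix.of fun i j => ∑ k, ∑ l, star (y k) * σ (i, k) (j, l) * y l

/-- The matrix `R` with entries `∑ i j, conj (f i) σ[(i,k),(j,l)] (f j)`. -/
def blockR (f : Fin n → ℂ) (σ : Matrix (Fin n × Fin n) (Fin n × Fin n) ℂ) :
    Matrix (Fin n) (Fin n) ℂ :=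
  Matrix.of fun k l => ∑ i, ∑ j, star (f i) * σ (i, k) (j, l) * f j

lemma quadA (σ : Matrix (Fin n × Fin n) (Fin n × Fin n) ℂ) (x y : Fin n → ℂ) :
    star x ⬝ᵥ (blockA σ y *ᵥ x) = star (tens x y) ⬝ᵥ (σ *ᵥ tens x y) := by
  simp only [dotProduct, mulVec, blockA, tens, of_apply, Pi.star_apply, star_mul',
    starRingEnd_apply, Fintype.sum_prod_type, Finset.mul_sum, Finset.sum_mul]
  rw [Finset.sum_congr rfl fun i _ => Finset.sum_comm]
  refine Finset.sum_congr rfl fun i _ => Finset.sum_congr rfl fun k _ =>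
    Finset.sum_congr rfl fun j _ => Finset.sum_congr rfl fun l _ => by ring

lemma hermA {σ : Matrix (Fin n × Fin n) (Fin n × Fin n) ℂ}
    (hσ : σ.IsHermitian) (y : Fin n → ℂ) : (blockA σ y).IsHermitian := by
  ext i j
  rw [conjTranspose_apply]
  simp only [blockA, of_apply, star_sum, star_mul', star_star]
  rw [Finset.sum_comm]
  refine Finset.sum_congr rfl fun k _ => Finset.sum_congr rfl fun l _ => ?_
  rw [hσ.apply]
  ring

lemma muA (f : Fin n → ℂ) (σ : Matrix (Fin n × Fin n) (Fin n × Fin n) ℂ) (y : Fin n → ℂ) :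
    star f ⬝ᵥ (blockA σ y *ᵥ f) = star y ⬝ᵥ (blockR f σ *ᵥ y) := by
  simp only [dotProduct, mulVec, blockA, blockR, of_apply, Pi.star_apply,
    Finset.mul_sum, Finset.sum_mul]
  rw [Finset.sum_congr rfl fun i _ => Finset.sum_comm]      -- ∑ i ∑ k ∑ j ∑ l
  rw [Finset.sum_congr rfl fun i _ => Finset.sum_congr rfl fun k _ => Finset.sum_comm]
                                                            -- ∑ i ∑ k ∑ l ∑ j
  rw [Finset.sum_comm]                                      -- ∑ k ∑ i ∑ l ∑ j
  rw [Finset.sum_congr rfl fun k _ => Finset.sum_comm]      -- ∑ k ∑ l ∑ i ∑ j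
  refine Finset.sum_congr rfl fun k _ => Finset.sum_congr rfl fun l _ =>
    Finset.sum_congr rfl fun i _ => Finset.sum_congr rfl fun j _ => by ring

/-- Core lemma: a hermitian block-positive `σ` whose form vanishes on `x ⊗ y`
for all `x ⊥ f` equals `proj f ⊗ₖ blockR f σ`. -/
lemma sigma_eq_kron (f : Fin n → ℂ) (hf : star f ⬝ᵥ f = 1)
    (σ : Matrix (Fin n × Fin n) (Fin n × Fin n) ℂ)
    (hherm : σ.IsHermitian)
    (hpos : ∀ x y : Fin n → ℂ, 0 ≤ star (tens x y) ⬝ᵥ (σ *ᵥ tens x y))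
    (hz : ∀ x y : Fin n → ℂ, star f ⬝ᵥ x = 0 →
      star (tens x y) ⬝ᵥ (σ *ᵥ tens x y) = 0) :
    σ = proj f ⊗ₖ blockR f σ := by
  have psdA : ∀ y, (blockA σ y).PosSemidef := fun y =>
    posSemidef_iff_dotProduct_mulVec.mpr ⟨hermA hherm y, fun x => by rw [quadA]; exact hpos x y⟩
  have kerA : ∀ y x, star f ⬝ᵥ x = 0 → blockA σ y *ᵥ x = 0 := fun y x hx =>
    ((psdA y).dotProduct_mulVec_zero_iff x).mp (by rw [quadA]; exact hz x y hx)
  have orthA : ∀ y x, star f ⬝ᵥ x = 0 → star x ⬝ᵥ (blockA σ y *ᵥ f) = 0 := by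
    intro y x hx
    have h1 : star x ᵥ* blockA σ y = star (blockA σ y *ᵥ x) := by
      rw [star_mulVec, (hermA hherm y).eq]
    rw [dotProduct_mulVec, h1, kerA y x hx, star_zero, zero_dotProduct]
  have hAf : ∀ y, blockA σ y *ᵥ f = (star f ⬝ᵥ (blockA σ y *ᵥ f)) • f := by
    intro y
    set v := blockA σ y *ᵥ f with hv
    set μ := star f ⬝ᵥ v with hμ
    have hwf : star f ⬝ᵥ (v - μ • f) = 0 := by
      simp [dotProduct_sub, dotProduct_smul, hf, smul_eq_mul, hμ]
    have h1 : star (v - μ • f) ⬝ᵥ v = 0 := orthA y _ hwf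
    have h2 : star (v - μ • f) ⬝ᵥ f = 0 := by
      have h3 := star_dotProduct f (v - μ • f)
      rw [hwf] at h3
      exact star_eq_zero.mp h3.symm
    have h3 : star (v - μ • f) ⬝ᵥ (v - μ • f) = 0 := by
      rw [dotProduct_sub, h1, dotProduct_smul, h2, smul_eq_mul, mul_zero, sub_zero]
    have h4 : v - μ • f = 0 := dotProduct_star_self_eq_zero.mp h3
    exact sub_eq_zero.mp h4
  have hAx : ∀ y x, blockA σ y *ᵥ x
      = ((star f ⬝ᵥ x) * (star f ⬝ᵥ (blockA σ y *ᵥ f))) • f := by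
    intro y x
    have hx' : star f ⬝ᵥ (x - (star f ⬝ᵥ x) • f) = 0 := by
      simp [dotProduct_sub, dotProduct_smul, hf, smul_eq_mul]
    have h0 := kerA y _ hx'
    rw [mulVec_sub, mulVec_smul, sub_eq_zero] at h0
    rw [h0, hAf y, dotProduct_smul, hf, smul_eq_mul, mul_one, smul_smul]
  have hAentry : ∀ y i j,
      blockA σ y i j = (star f ⬝ᵥ (blockA σ y *ᵥ f)) * (f i * star (f j)) := by
    intro y i j
    have h0 := congrFun (hAx y (Pi.single j 1)) i
    simp only [mulVec_single, mul_one, dotProduct_single, Pi.star_apply,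
      Pi.smul_apply, smul_eq_mul] at h0
    rw [MulOpposite.op_one, one_smul] at h0; exact h0.trans (by ring)
  -- entrywise identification
  have key : ∀ i j k l, σ (i, k) (j, l) = f i * star (f j) * blockR f σ k l := by
    intro i j k l
    have e1 : ∀ y : Fin n → ℂ,
        star y ⬝ᵥ ((Matrix.of fun k l => σ (i, k) (j, l)) *ᵥ y) = blockA σ y i j := by
      intro y
      simp only [dotProduct, mulVec, of_apply, blockA, Pi.star_apply, Finset.mul_sum]
      exact Finset.sum_congr rfl fun k _ => Finset.sum_congr rfl fun l _ => by ring
    have hM : (Matrix.of fun k l => σ (i, k) (j, l))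
        - (f i * star (f j)) • blockR f σ = 0 := by
      apply quad_zero
      intro y
      rw [sub_mulVec, dotProduct_sub, smul_mulVec, dotProduct_smul, smul_eq_mul,
        e1, hAentry y i j, ← muA f σ y]
      ring
    have h5 := congrFun (congrFun hM k) l
    simp only [Matrix.sub_apply, Matrix.smul_apply, of_apply, Matrix.zero_apply,
      smul_eq_mul, sub_eq_zero] at h5
    exact h5
  ext ⟨i, k⟩ ⟨j, l⟩
  rw [kroneckerMap_apply, proj, vecMulVec_apply, Pi.star_apply, key i j k l]

lemma trace_proj (f : Fin n → ℂ) (hf : star f ⬝ᵥ f = 1) : (proj f).trace = 1 := by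
  rw [← hf]
  simp only [trace, diag, proj, vecMulVec_apply, Pi.star_apply, dotProduct]
  exact Finset.sum_congr rfl fun i _ => mul_comm _ _

lemma trace_proj_mul (g : Fin n → ℂ) (R : Matrix (Fin n) (Fin n) ℂ) :
    (proj g * R).trace = star g ⬝ᵥ (R *ᵥ g) := by
  simp only [trace, diag, Matrix.mul_apply, proj, vecMulVec_apply, Pi.star_apply,
    dotProduct, mulVec, Finset.mul_sum]
  rw [Finset.sum_comm]
  exact Finset.sum_congr rfl fun k _ => Finset.sum_congr rfl fun l _ => by ring

end ExtremeAux

open ExtremeAux in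
/-- `p ⊗ 1` with `p` a rank-one projection is an extreme point of `𝔇`. -/
theorem p_tensor_one_extreme {n : ℕ}
    (f : Fin n → ℂ) (hf : star f ⬝ᵥ f = 1)
    (σ₁ σ₂ : Matrix (Fin n × Fin n) (Fin n × Fin n) ℂ)
    (h₁ : memD σ₁) (h₂ : memD σ₂)
    (lam : ℝ) (hlam₀ : 0 < lam) (hlam₁ : lam < 1)
    (hconv : proj f ⊗ₖ (1 : Matrix (Fin n) (Fin n) ℂ) =
      lam • σ₁ + (1 - lam) • σ₂) :
    σ₁ = proj f ⊗ₖ (1 : Matrix (Fin n) (Fin n) ℂ) ∧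
    σ₂ = proj f ⊗ₖ (1 : Matrix (Fin n) (Fin n) ℂ) := by
  obtain ⟨hherm₁, hpos₁, htr₁⟩ := h₁
  obtain ⟨hherm₂, hpos₂, htr₂⟩ := h₂
  -- the form of `proj f ⊗ₖ 1` vanishes on `x ⊗ y` with `x ⊥ f`
  have hP0 : ∀ x y : Fin n → ℂ, star f ⬝ᵥ x = 0 →
      star (tens x y) ⬝ᵥ ((proj f ⊗ₖ (1 : Matrix (Fin n) (Fin n) ℂ)) *ᵥ tens x y) = 0 := by
    intro x y hx
    have hbA : blockA (proj f ⊗ₖ (1 : Matrix (Fin n) (Fin n) ℂ)) y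
        = (star y ⬝ᵥ y) • proj f := by
      ext i j
      simp only [blockA, of_apply, kroneckerMap_apply, Matrix.one_apply, mul_ite,
        mul_one, mul_zero, ite_mul, zero_mul, Finset.sum_ite_eq, Finset.mem_univ,
        if_true, Matrix.smul_apply, smul_eq_mul, dotProduct, Pi.star_apply,
        Finset.sum_mul]
      exact Finset.sum_congr rfl fun k _ => by ring
    have hproj : proj f *ᵥ x = 0 := by
      ext i
      simp only [proj, mulVec, dotProduct, vecMulVec_apply, Pi.star_apply, Pi.zero_apply]
      have : ∑ j, f i * star (f j) * x j = f i * (star f ⬝ᵥ x) := by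
        rw [dotProduct, Finset.mul_sum]
        exact Finset.sum_congr rfl fun j _ => by simp [Pi.star_apply]; ring
      rw [this, hx, mul_zero]
    rw [← quadA, hbA, smul_mulVec, hproj, smul_zero, dotProduct_zero]
  -- each σᵢ's form vanishes on such product vectors
  have hz : ∀ x y : Fin n → ℂ, star f ⬝ᵥ x = 0 →
      star (tens x y) ⬝ᵥ (σ₁ *ᵥ tens x y) = 0 ∧
      star (tens x y) ⬝ᵥ (σ₂ *ᵥ tens x y) = 0 := by
    intro x y hx
    have h0 : (lam : ℂ) * (star (tens x y) ⬝ᵥ (σ₁ *ᵥ tens x y))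
        + ((1 - lam : ℝ) : ℂ) * (star (tens x y) ⬝ᵥ (σ₂ *ᵥ tens x y)) = 0 := by
      have h0' := hP0 x y hx
      rw [hconv] at h0'
      rw [← h0', add_mulVec, dotProduct_add, smul_mulVec, smul_mulVec,
        dotProduct_smul, dotProduct_smul]
      simp [Complex.real_smul]
    have ha := hpos₁ x y
    have hb := hpos₂ x y
    have hla : (0:ℂ) ≤ (lam : ℂ) * (star (tens x y) ⬝ᵥ (σ₁ *ᵥ tens x y)) :=
      mul_nonneg (by exact_mod_cast hlam₀.le) ha
    have hlb : (0:ℂ) ≤ ((1 - lam : ℝ) : ℂ) * (star (tens x y) ⬝ᵥ (σ₂ *ᵥ tens x y)) :=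
      mul_nonneg (by exact_mod_cast (by linarith : (0:ℝ) ≤ 1 - lam)) hb
    have hz1 := (add_eq_zero_iff_of_nonneg hla hlb).mp h0
    refine ⟨(mul_eq_zero.mp hz1.1).resolve_left ?_,
      (mul_eq_zero.mp hz1.2).resolve_left ?_⟩
    · exact_mod_cast hlam₀.ne'
    · exact_mod_cast (by linarith : (1 - lam : ℝ) ≠ 0)
  -- identify each σᵢ
  have main : ∀ σ : Matrix (Fin n × Fin n) (Fin n × Fin n) ℂ,
      σ.IsHermitian →
      (∀ x y : Fin n → ℂ, 0 ≤ star (tens x y) ⬝ᵥ (σ *ᵥ tens x y)) →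
      (∀ g : Fin n → ℂ, star g ⬝ᵥ g = 1 →
        Matrix.trace (((1 : Matrix (Fin n) (Fin n) ℂ) ⊗ₖ proj g) * σ) = 1) →
      (∀ x y : Fin n → ℂ, star f ⬝ᵥ x = 0 →
        star (tens x y) ⬝ᵥ (σ *ᵥ tens x y) = 0) →
      σ = proj f ⊗ₖ (1 : Matrix (Fin n) (Fin n) ℂ) := by
    intro σ hherm hpos htr hzz
    have hkron := sigma_eq_kron f hf σ hherm hpos hzz
    have hRquad : ∀ g : Fin n → ℂ, star g ⬝ᵥ g = 1 →
        star g ⬝ᵥ (blockR f σ *ᵥ g) = 1 := by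
      intro g hg
      have h1 := htr g hg
      rw [hkron, ← mul_kronecker_mul, Matrix.one_mul, trace_kronecker,
        trace_proj f hf, one_mul, trace_proj_mul] at h1
      exact h1
    have hR1 : blockR f σ = 1 := by
      rw [← sub_eq_zero]
      apply quad_zero
      intro g
      rcases eq_or_ne g 0 with rfl | hg
      · simp
      · set S : ℝ := ∑ i, Complex.normSq (g i) with hS
        have hgg : star g ⬝ᵥ g = (S : ℂ) := by
          rw [hS]
          push_cast
          simp only [dotProduct, Pi.star_apply]
          exact Finset.sum_congr rfl fun i _ => Complex.normSq_eq_conj_mul_self.symm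
        have hSpos : 0 < S := by
          obtain ⟨i, hi⟩ := Function.ne_iff.mp hg
          refine Finset.sum_pos' (fun j _ => Complex.normSq_nonneg _)
            ⟨i, Finset.mem_univ i, Complex.normSq_pos.mpr hi⟩
        set c : ℝ := (Real.sqrt S)⁻¹ with hc
        have hccS : (c : ℂ) * ((c : ℂ) * (S : ℂ)) = 1 := by
          rw [← Complex.ofReal_mul, ← Complex.ofReal_mul, ← Complex.ofReal_one]
          congr 1
          rw [hc, ← mul_assoc, ← mul_inv, Real.mul_self_sqrt hSpos.le,
            inv_mul_cancel₀ hSpos.ne']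
        have hcne : (c : ℂ) ≠ 0 := by
          simp [hc, Real.sqrt_eq_zero', hSpos.ne', not_le, hSpos]
        have hunit : star ((c : ℂ) • g) ⬝ᵥ ((c : ℂ) • g) = 1 := by
          rw [star_smul, smul_dotProduct, dotProduct_smul, hgg, smul_eq_mul,
            smul_eq_mul, Complex.star_def, Complex.conj_ofReal]
          exact hccS
        have hq := hRquad ((c : ℂ) • g) hunit
        rw [star_smul, smul_dotProduct, mulVec_smul, dotProduct_smul, smul_eq_mul,
          smul_eq_mul, Complex.star_def, Complex.conj_ofReal] at hq
        -- hq : c * (c * (star g ⬝ᵥ R *ᵥ g)) = 1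
        have hX : star g ⬝ᵥ (blockR f σ *ᵥ g) = (S : ℂ) := by
          have := hq.trans hccS.symm
          exact mul_left_cancel₀ hcne (mul_left_cancel₀ hcne this)
        rw [sub_mulVec, dotProduct_sub, one_mulVec, hX, hgg, sub_self]
    rw [hkron, hR1]
  exact ⟨main σ₁ hherm₁ hpos₁ htr₁ (fun x y hx => (hz x y hx).1),
    main σ₂ hherm₂ hpos₂ htr₂ (fun x y hx => (hz x y hx).2)⟩
end
end

section
/- Let w = Σ_{i,j=1}^{2} E_{ij} ⊗ E_{ji} ⊕ 0 be the swap on the span of {e₁,e₂} embedded in ℂ³⊗ℂ³, and x = (1/√2)(e₁+e₂)⊗e₃. Then s₀ = w + P_x is a partial symmetry: s₀ = s₀* and s₀² is an orthogonal projection of rank 5. Moreover the partial transpose (1⊗τ)(s₀) is positive semidefinite. -/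
open Matrix Kronecker
open scoped ComplexOrder

noncomputable section

/-- the constant 1/√2 -/
def cc : ℂ := ((Real.sqrt 2 : ℂ))⁻¹

lemma sqrt2_sq : ((Real.sqrt 2:ℝ):ℂ) * ((Real.sqrt 2:ℝ):ℂ) = 2 := by
  norm_cast
  rw [Real.mul_self_sqrt] <;> norm_num

/-- the vector x, explicitly -/
def xv : Fin 3 × Fin 3 → ℂ := fun p => if p.2 = 2 ∧ p.1 ≠ 2 then cc else 0

/-- explicit form of s₀ -/
def Smat : Matrix (Fin 3 × Fin 3) (Fin 3 × Fin 3) ℂ :=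
  Matrix.of fun p q =>
    (if p.1 = q.2 ∧ p.2 = q.1 ∧ p.1 ≠ 2 ∧ p.2 ≠ 2 then 1 else 0) + xv p * xv q

/-- isometry whose range is the range of s₀² -/
def Amat : Matrix (Fin 3 × Fin 3) (Fin 5) ℂ :=
  Matrix.of fun p k =>
    ![if p = (0,0) then 1 else 0, if p = (0,1) then 1 else 0,
      if p = (1,0) then 1 else 0, if p = (1,1) then 1 else 0, xv p] k

/-- square root of the partial transpose of s₀ -/
def Cmat : Matrix (Fin 2) (Fin 3 × Fin 3) ℂ :=
  Matrix.of fun k p =>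
    ![if p = ((0 : Fin 3),(0 : Fin 3)) ∨ p = (1,1) then 1 else 0, xv p] k

set_option maxHeartbeats 2000000 in
lemma s_eq :
    (∑ i ∈ ({0, 1} : Finset (Fin 3)), ∑ j ∈ ({0, 1} : Finset (Fin 3)),
        Matrix.single i j (1 : ℂ) ⊗ₖ Matrix.single j i (1 : ℂ))
      + projT (tens (((Real.sqrt 2 : ℂ))⁻¹ • (ev 0 + ev 1)) (ev 2)) = Smat := by
  ext ⟨a, b⟩ ⟨c, d⟩
  simp only [Matrix.add_apply, Matrix.sum_apply, Matrix.kroneckerMap_apply,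
    Matrix.single, Matrix.of_apply,
    Finset.sum_insert (by decide : (0:Fin 3) ∉ ({1} : Finset (Fin 3))), Finset.sum_singleton,
    projT, Matrix.vecMulVec_apply, tens, ev, Pi.star_apply, star_mul',
    Pi.smul_apply, Pi.add_apply, Pi.single_apply, smul_eq_mul,
    RCLike.star_def, map_inv₀, _root_.map_mul, map_add, Complex.conj_ofReal,
    apply_ite, _root_.map_one, _root_.map_zero, Smat, xv]
  fin_cases a <;> fin_cases b <;> fin_cases c <;> fin_cases d <;> norm_num [cc, Fin.ext_iff]

set_option maxHeartbeats 2000000 in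
lemma s_herm : Smat.IsHermitian := by
  rw [Matrix.IsHermitian]
  ext ⟨a, b⟩ ⟨c, d⟩
  simp only [Matrix.conjTranspose_apply, Smat, xv, Matrix.of_apply, star_add, star_mul',
    apply_ite, RCLike.star_def, map_inv₀, Complex.conj_ofReal, _root_.map_one, _root_.map_zero, cc]
  fin_cases a <;> fin_cases b <;> fin_cases c <;> fin_cases d <;> norm_num [Fin.ext_iff]

set_option maxHeartbeats 2000000 in
lemma AhA : Amatᴴ * Amat = 1 := by
  ext k l
  fin_cases k <;> fin_cases l <;>
    simp [Matrix.mul_apply, Matrix.conjTranspose_apply, Amat, Matrix.one_apply,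
      Fintype.sum_prod_type, Fin.sum_univ_three, xv, Prod.ext_iff, Fin.ext_iff,
      apply_ite, map_inv₀, Complex.conj_ofReal, cc, -Fin.val_eq_zero_iff] <;>
    norm_num [← mul_inv, sqrt2_sq] <;> decide

set_option maxHeartbeats 2000000 in
lemma sq_eq : Smat * Smat = Amat * Amatᴴ := by
  ext ⟨a, b⟩ ⟨c, d⟩
  simp only [Matrix.mul_apply, Fintype.sum_prod_type, Fin.sum_univ_three, Fin.sum_univ_five,
    Matrix.conjTranspose_apply, Smat, Amat, Matrix.of_apply, Matrix.cons_val_zero,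
    Matrix.cons_val_one, Matrix.head_cons, Matrix.cons_val_two, Matrix.cons_val_three,
    Matrix.cons_val_four, Matrix.tail_cons, xv]
  fin_cases a <;> fin_cases b <;> fin_cases c <;> fin_cases d <;>
    norm_num [Prod.ext_iff, Fin.ext_iff, cc, ← mul_inv, sqrt2_sq]

set_option maxHeartbeats 2000000 in
lemma pt_eq : ptrans Smat = Cmatᴴ * Cmat := by
  ext ⟨a, b⟩ ⟨c, d⟩
  simp only [ptrans, Matrix.mul_apply, Matrix.conjTranspose_apply, Cmat, Smat, Matrix.of_apply,
    Fin.sum_univ_two, Matrix.cons_val_zero, Matrix.cons_val_one, Matrix.head_cons, xv,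
    apply_ite, RCLike.star_def, map_inv₀, Complex.conj_ofReal,
    _root_.map_one, _root_.map_zero, cc]
  fin_cases a <;> fin_cases b <;> fin_cases c <;> fin_cases d <;>
    norm_num [Fin.ext_iff, Prod.ext_iff, ← mul_inv, sqrt2_sq]

/-- with `w = Σ_{i,j=1}^{2} E_{ij} ⊗ E_{ji}` (the swap on `span{e₁,e₂}`
embedded in `ℂ³⊗ℂ³`) and `x = (1/√2)(e₁+e₂)⊗e₃`, the operator `s₀ = w + P_x` is a
partial symmetry: `s₀ = s₀*`, `s₀²` is an orthogonal projection of rank 5, and the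
partial transpose of `s₀` is positive semidefinite. -/
theorem embedded_swap_partial_symmetry :
    let w : Matrix (Fin 3 × Fin 3) (Fin 3 × Fin 3) ℂ :=
      ∑ i ∈ ({0, 1} : Finset (Fin 3)), ∑ j ∈ ({0, 1} : Finset (Fin 3)),
        Matrix.single i j (1 : ℂ) ⊗ₖ Matrix.single j i (1 : ℂ)
    let x : Fin 3 × Fin 3 → ℂ :=
      tens (((Real.sqrt 2 : ℂ))⁻¹ • (ev 0 + ev 1)) (ev 2)
    let s₀ : Matrix (Fin 3 × Fin 3) (Fin 3 × Fin 3) ℂ := w + projT x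
    s₀.IsHermitian ∧ (s₀ * s₀).IsHermitian ∧
    (s₀ * s₀) * (s₀ * s₀) = s₀ * s₀ ∧
    (s₀ * s₀).rank = 5 ∧
    (ptrans s₀).PosSemidef := by
  intro w x s₀
  have hs : s₀ = Smat := s_eq
  have hsq : s₀ * s₀ = Amat * Amatᴴ := by rw [hs, sq_eq]
  have hrkA : Amat.rank = 5 := by
    refine le_antisymm ?_ ?_
    · simpa using Amat.rank_le_card_width
    · have h := Matrix.rank_conjTranspose_mul_self Amat
      rw [AhA, Matrix.rank_one] at h
      simp at h
      omega
  refine ⟨hs ▸ s_herm, ?_, ?_, ?_, ?_⟩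
  · rw [hsq, Matrix.IsHermitian, Matrix.conjTranspose_mul, Matrix.conjTranspose_conjTranspose]
  · rw [hsq, Matrix.mul_assoc, ← Matrix.mul_assoc Amatᴴ, AhA, Matrix.one_mul]
  · rw [hsq, Matrix.rank_self_mul_conjTranspose, hrkA]
  · rw [hs, pt_eq]
    exact Matrix.posSemidef_conjTranspose_mul_self Cmat
end
end

section
/- In ℂ³⊗ℂ³, with w = Σ_{i,j=1}^{2} E_{ij}⊗E_{ji} and x = e₃⊗e₃, the operator s = w + P_x is a partial symmetry (s = s*, s² an orthogonal projection) with rank(s²) = 5, and its partial transpose (1⊗τ)(s) is positive semidefinite. -/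
open Matrix Kronecker
open scoped ComplexOrder

noncomputable section

/-- Any `projT v` is positive semidefinite. -/
lemma projT_psd {n : ℕ} (v : Fin n × Fin n → ℂ) : (projT v).PosSemidef := by
  have h : projT v = replicateCol (Fin 1) v * (replicateCol (Fin 1) v)ᴴ := by
    rw [conjTranspose_replicateCol]; exact vecMulVec_eq (Fin 1) _ _
  rw [h]
  exact posSemidef_self_mul_conjTranspose _

set_option maxHeartbeats 2000000 in
/-- with `w = Σ_{i,j=1}^{2} E_{ij} ⊗ E_{ji}` and `x = e₃⊗e₃`, the
operator `s = w + P_x` is a partial symmetry with `rank(s²) = 5` and positive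
semidefinite partial transpose. -/
theorem embedded_swap_plus_e33_partial_symmetry :
    let w : Matrix (Fin 3 × Fin 3) (Fin 3 × Fin 3) ℂ :=
      ∑ i ∈ ({0, 1} : Finset (Fin 3)), ∑ j ∈ ({0, 1} : Finset (Fin 3)),
        Matrix.single i j (1 : ℂ) ⊗ₖ Matrix.single j i (1 : ℂ)
    let x : Fin 3 × Fin 3 → ℂ := tens (ev 2) (ev 2)
    let s : Matrix (Fin 3 × Fin 3) (Fin 3 × Fin 3) ℂ := w + projT x
    s.IsHermitian ∧ (s * s).IsHermitian ∧
    (s * s) * (s * s) = s * s ∧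
    (s * s).rank = 5 ∧
    (ptrans s).PosSemidef := by
  intro w x s
  -- explicit entrywise description of `s`
  have hpair : ∀ f : Fin 3 → Matrix (Fin 3 × Fin 3) (Fin 3 × Fin 3) ℂ,
      ∑ j ∈ ({0,1} : Finset (Fin 3)), f j = f 0 + f 1 :=
    fun f => Finset.sum_pair (by decide)
  have hS : s = Matrix.of (fun p q : Fin 3 × Fin 3 =>
      if q = (p.2, p.1) ∧ (p = (2,2) ∨ (p.1 ≠ 2 ∧ p.2 ≠ 2)) then (1:ℂ) else 0) := by
    ext ⟨a,b⟩ ⟨c,d⟩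
    show w (a,b) (c,d) + projT x (a,b) (c,d) = _
    simp only [w, x, hpair, Matrix.add_apply, kroneckerMap_apply, Matrix.single,
      Matrix.of_apply, projT, vecMulVec_apply, tens, ev, Pi.star_apply, Pi.single_apply,
      mul_ite, ite_mul, one_mul, mul_one, mul_zero, zero_mul, star_one, star_zero,
      Prod.mk.injEq]
    fin_cases a <;> fin_cases b <;> fin_cases c <;> fin_cases d <;> simp
  -- diagonal description of `s * s`
  set dd : Fin 3 × Fin 3 → ℂ :=
    fun p => if p = (2,2) ∨ (p.1 ≠ 2 ∧ p.2 ≠ 2) then (1:ℂ) else 0 with hdd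
  have hsq : s * s = Matrix.diagonal dd := by
    rw [hS]
    ext ⟨a,b⟩ ⟨c,d⟩
    rw [Matrix.mul_apply]
    simp only [Matrix.of_apply, Matrix.diagonal_apply, hdd, Fintype.sum_prod_type,
      mul_ite, ite_mul, one_mul, mul_one, mul_zero, zero_mul, Fin.sum_univ_three,
      Prod.mk.injEq]
    fin_cases a <;> fin_cases b <;> fin_cases c <;> fin_cases d <;> simp
  -- Hermitian-ness of `s`
  have hherm : s.IsHermitian := by
    rw [Matrix.IsHermitian, hS]
    ext ⟨a,b⟩ ⟨c,d⟩
    simp only [Matrix.conjTranspose_apply, Matrix.of_apply, Prod.mk.injEq]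
    fin_cases a <;> fin_cases b <;> fin_cases c <;> fin_cases d <;> simp
  refine ⟨hherm, ?_, ?_, ?_, ?_⟩
  · rw [hsq]
    refine Matrix.isHermitian_diagonal_of_self_adjoint _ (funext fun p => ?_)
    simp only [Pi.star_apply, hdd]
    split <;> simp
  · have hmul : (fun i => dd i * dd i) = dd := by
      funext p
      simp only [Pi.mul_apply, hdd]
      split <;> simp
    rw [hsq, Matrix.diagonal_mul_diagonal, hmul]
  · rw [hsq, Matrix.rank_diagonal]
    have he : ∀ p : Fin 3 × Fin 3, dd p ≠ 0 ↔ (p = (2,2) ∨ (p.1 ≠ 2 ∧ p.2 ≠ 2)) := by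
      intro p
      simp only [hdd]
      split <;> simp_all
    rw [Fintype.card_congr (Equiv.subtypeEquivRight he)]
    decide
  · have hpt : ptrans s = projT (fun p => tens (ev 0) (ev 0) p + tens (ev 1) (ev 1) p)
        + projT x := by
      ext ⟨a,b⟩ ⟨c,d⟩
      show (ptrans s) (a,b) (c,d) = _
      rw [hS]
      simp only [ptrans, Matrix.of_apply, Matrix.add_apply, projT, vecMulVec_apply,
        tens, ev, x, Pi.star_apply, Pi.single_apply, Prod.mk.injEq,
        star_add, apply_ite (star : ℂ → ℂ), star_one, star_zero,
        mul_ite, ite_mul, one_mul, mul_one, mul_zero, zero_mul, add_zero, zero_add]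
      fin_cases a <;> fin_cases b <;> fin_cases c <;> fin_cases d <;> simp
    rw [hpt]
    exact (projT_psd _).add (projT_psd _)
end
end
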